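/- Let d ≥ 2 and N ≥ 2, define for i = 1,…,d−1 the polynomials P_i(α) = ∑_{k=2}^N α^{i·d^{N−k}}, and set ψ_1^{(3)}(α) = (1, P_1(α), P_2(α), …, P_{d−1}(α)) ∈ ℂ^d. Let V_3 = { ψ_1^{(3)}(α) ⊗ ψ_2(α) ⊗ ⋯ ⊗ ψ_N(α) : α ∈ ℂ } ⊆ (ℂ^d)^{⊗N}. Then the orthogonal complement of span V_3 in (ℂ^d)^{⊗N} is a genuinely entangled subspace of dimension d^{N−2}(d−1)² = d^N − 2d^{N−1} + d^{N−2}; equivalently, dim span V_3 = 2d^{N−1} − d^{N−2} and every nonzero vector orthogonal to all members of V_3 is genuinely multiparty entangled. -/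

import Mathlib

noncomputable section

/-- The `N`-qudit Hilbert space `(ℂ^d)^{⊗N}`, realized as the Euclidean space whose
coordinates are indexed by tuples of local indices. -/
abbrev QSpace (N d : ℕ) := EuclideanSpace ℂ (Fin N → Fin d)

/-- `v` is biproduct: for some bipartition `S|Sᶜ` of the parties, `v = φ ⊗ χ` with
`φ` a vector on the parties in `S` and `χ` a vector on the parties in `Sᶜ`
(under the canonical factor-reordering isomorphism). -/
def Biproduct {N d : ℕ} (v : QSpace N d) : Prop :=
  ∃ S : Set (Fin N), S.Nonempty ∧ S ≠ Set.univ ∧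
    ∃ (φ : ((i : S) → Fin d) → ℂ) (χ : ((i : ↥Sᶜ) → Fin d) → ℂ),
      ∀ f : Fin N → Fin d, v f = φ (fun i => f i) * χ (fun i => f i)

/-- A vector is genuinely multiparty entangled if it is nonzero and not biproduct. -/
def GME {N d : ℕ} (v : QSpace N d) : Prop :=
  v ≠ 0 ∧ ¬ Biproduct v

/-- A genuinely entangled subspace: all its nonzero vectors are GME. -/
def IsGES {N d : ℕ} (G : Submodule ℂ (QSpace N d)) : Prop :=
  ∀ v ∈ G, v ≠ 0 → GME v

/-- The fully product vector `ψ₁(α) ⊗ ψ₂(α) ⊗ ⋯ ⊗ ψ_N(α)`, where the first-party vector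
`ψ₁(α)` has coordinates `v1 α` and, for `k = 2, …, N` (i.e. party index `i = k - 1 ≥ 1`),
`ψ_k(α) = (1, α^{d^{N-k}}, α^{2·d^{N-k}}, …, α^{(d-1)·d^{N-k}})`. -/
def PsiFam (N d : ℕ) (v1 : ℂ → Fin d → ℂ) (α : ℂ) : QSpace N d :=
  WithLp.toLp 2 (fun f => ∏ i : Fin N,
    if (i : ℕ) = 0 then v1 α (f i)
    else α ^ ((f i : ℕ) * d ^ (N - 1 - (i : ℕ))))


/-!
Write `N = n + 1`. The `f`-coordinate of `ψ(α)` is `Q_f(α)` for a polynomial `Q_f` with natural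
coefficients, so `v ⟂ ψ(α)` for every `α` exactly when `∑_f v_f Q_f = 0`: the orthogonal
complement is the kernel of `v ↦ ∑_f v_f Q_f`. Reading exponents in base `d`, the `Q_f` span
exactly the polynomials of degree `< (2d - 1) d^{n-1}`, which gives both dimensions.

Since `Q_f` is a product of one-party factors, each equal to `1` at the index `0`, a product vector
`φ ⊗ χ` is sent to `P_S(φ) · P_{S̄}(χ)` with `P_S(φ) = ∑_a φ_a Q_ā`, where `ā` extends `a` by
zeros. For `S ≠ univ` the polynomials `Q_ā` are linearly independent. If the first party is not in
`S` they are distinct monomials. Otherwise some other party outside `S` leaves an empty base-`d`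
digit in every exponent, and the coefficients at the exponents obtained by placing the first
party's index into that digit form a triangular system. Hence one of `φ`, `χ` vanishes.
-/

open Polynomial Finset

section BigEndian

variable {n d : ℕ}

def bigEndianValue (g : Fin n → Fin d) : ℕ := ∑ k, (g k : ℕ) * d ^ (n - 1 - k)

theorem bigEndianValue_eq (g : Fin n → Fin d) :
    bigEndianValue g = finFunctionFinEquiv (fun k => g k.rev) := by
  rw [finFunctionFinEquiv_apply, bigEndianValue, ← Equiv.sum_comp Fin.revPerm]
  refine Finset.sum_congr rfl fun k _ => ?_
  simp only [Fin.revPerm_apply, Fin.val_rev]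
  congr 2
  omega

theorem bigEndianValue_lt (g : Fin n → Fin d) : bigEndianValue g < d ^ n := by
  rw [bigEndianValue_eq]
  exact Fin.is_lt _

theorem bigEndianValue_injective : Function.Injective (bigEndianValue : (Fin n → Fin d) → ℕ) := by
  intro g g' h
  simp only [bigEndianValue_eq, Fin.val_inj, EmbeddingLike.apply_eq_iff_eq] at h
  funext k
  simpa using congrFun h k.rev

theorem exists_bigEndianValue_eq {m : ℕ} (hm : m < d ^ n) :
    ∃ g : Fin n → Fin d, bigEndianValue g = m :=
  ⟨fun k => finFunctionFinEquiv.symm ⟨m, hm⟩ k.rev, by simp [bigEndianValue_eq]⟩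

theorem bigEndianValue_div_pow_mod (g : Fin n → Fin d) (k : Fin n) :
    bigEndianValue g / d ^ (n - 1 - k) % d = g k := by
  have := finFunctionFinEquiv_symm_apply_val (finFunctionFinEquiv (fun k => g k.rev)) k.rev
  rw [Equiv.symm_apply_apply, Fin.rev_rev, Fin.val_rev] at this
  rw [bigEndianValue_eq, this]
  congr 3
  omega

end BigEndian

theorem linearIndependent_of_triangular {ι R M : Type*} [Fintype ι] [CommRing R]
    [NoZeroDivisors R] [AddCommGroup M] [Module R M] (v : ι → M) (ℓ : ι → M →ₗ[R] R)
    (r : ι → ℕ) (hdiag : ∀ i, ℓ i (v i) ≠ 0)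
    (htri : ∀ i j, j ≠ i → ℓ i (v j) ≠ 0 → r j < r i) : LinearIndependent R v := by
  rw [Fintype.linearIndependent_iff]
  intro c hc i
  induction hi : r i using Nat.strong_induction_on generalizing i with
  | _ k ih =>
    have hsum : ∑ j, c j * ℓ i (v j) = 0 := by simpa using congrArg (ℓ i) hc
    rw [Finset.sum_eq_single i] at hsum
    · exact (mul_eq_zero.mp hsum).resolve_right (hdiag i)
    · intro j _ hji
      by_cases hj : ℓ i (v j) = 0
      · rw [hj, mul_zero]
      · rw [ih (r j) (hi ▸ htri i j hji hj) j rfl, zero_mul]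
    · simp

theorem Polynomial.coeff_sum_X_pow_ne_zero_iff {ι R : Type*} [Semiring R] [CharZero R]
    (s : Finset ι) (k : ι → ℕ) (e : ℕ) :
    (∑ t ∈ s, (X : R[X]) ^ k t).coeff e ≠ 0 ↔ ∃ t ∈ s, e = k t := by
  simp only [finsetSum_coeff, coeff_X_pow, Finset.sum_boole, ne_eq, Nat.cast_eq_zero,
    Finset.card_eq_zero, Finset.filter_eq_empty_iff, not_forall, not_not, exists_prop]

section Bipartition

variable {ι κ : Type*} (S : Set ι) [DecidablePred (· ∈ S)]

theorem sum_smul_prod_eq_mul [Fintype ι] [DecidableEq ι] [Fintype κ] {R A : Type*}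
    [CommSemiring R] [CommSemiring A] [Algebra R A]
    (w : ι → κ → A) (φ : (S → κ) → R) (χ : (↥Sᶜ → κ) → R) :
    ∑ f : ι → κ, (φ (fun i => f i) * χ (fun i => f i)) • ∏ i, w i (f i)
      = (∑ a, φ a • ∏ i : S, w i (a i)) * ∑ b, χ b • ∏ i : ↥Sᶜ, w i (b i) := by
  rw [Finset.sum_mul_sum, ← Fintype.sum_prod_type']
  refine Fintype.sum_equiv (Equiv.piEquivPiSubtypeProd (· ∈ S) _) _ _ fun f => ?_
  rw [smul_mul_smul_comm, ← Fintype.prod_subtype_mul_prod_subtype (· ∈ S)]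
  rfl

variable [Zero κ]

def extendByZero (a : S → κ) : ι → κ := fun i => if h : i ∈ S then a ⟨i, h⟩ else 0

variable {S}

theorem extendByZero_injective : Function.Injective (extendByZero S : (S → κ) → ι → κ) := by
  intro a a' h
  funext i
  simpa [extendByZero] using congrFun h i

theorem extendByZero_of_notMem (a : S → κ) {i : ι} (hi : i ∉ S) : extendByZero S a i = 0 :=
  dif_neg hi

theorem prod_extendByZero [Fintype ι] {M : Type*} [CommMonoid M] (w : ι → κ → M)
    (hw : ∀ i, w i 0 = 1) (a : S → κ) : ∏ i, w i (extendByZero S a i) = ∏ i : S, w i (a i) := by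
  simp only [extendByZero, apply_dite, Fintype.prod_dite, hw, Finset.prod_const_one, mul_one]

end Bipartition

section CoordPoly

variable (n d : ℕ)

def firstWeight (j : Fin d) : ℂ[X] :=
  ∑ t ∈ range (if (j : ℕ) = 0 then 1 else n), X ^ ((j : ℕ) * d ^ t)

def partyWeight (i : Fin (n + 1)) (j : Fin d) : ℂ[X] :=
  if i = 0 then firstWeight n d j else X ^ ((j : ℕ) * d ^ (n - i))

def coordPoly (f : Fin (n + 1) → Fin d) : ℂ[X] := ∏ i, partyWeight n d i (f i)

def psiFirst (N d : ℕ) (α : ℂ) (j : Fin d) : ℂ :=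
  if (j : ℕ) = 0 then 1 else ∑ t ∈ range (N - 1), α ^ ((j : ℕ) * d ^ t)

variable {n d}

theorem eval_coordPoly (α : ℂ) (f : Fin (n + 1) → Fin d) :
    (coordPoly n d f).eval α = PsiFam (n + 1) d (psiFirst (n + 1) d) α f := by
  rw [coordPoly, eval_prod, PsiFam, PiLp.toLp_apply]
  refine Finset.prod_congr rfl fun i _ => ?_
  by_cases hi : i = 0
  · subst hi
    by_cases hj : (f 0 : ℕ) = 0 <;> simp [partyWeight, firstWeight, psiFirst, hj, eval_finsetSum]
  · simp [partyWeight, hi, Fin.val_eq_zero_iff]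

theorem partyWeight_zero [NeZero d] (i : Fin (n + 1)) : partyWeight n d i 0 = 1 := by
  by_cases hi : i = 0 <;> simp [partyWeight, firstWeight, hi]

theorem coordPoly_eq_sum (f : Fin (n + 1) → Fin d) :
    coordPoly n d f = ∑ t ∈ range (if (f 0 : ℕ) = 0 then 1 else n),
      X ^ ((f 0 : ℕ) * d ^ t + bigEndianValue (Fin.tail f)) := by
  have htail : ∏ k : Fin n, partyWeight n d k.succ (f k.succ)
      = X ^ bigEndianValue (Fin.tail f) := by
    rw [bigEndianValue, ← prod_pow_eq_pow_sum]
    refine Finset.prod_congr rfl fun k _ => ?_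
    simp only [partyWeight, Fin.succ_ne_zero, if_false, Fin.val_succ, Fin.tail]
    congr 3
    omega
  rw [coordPoly, Fin.prod_univ_succ, htail, partyWeight, if_pos rfl, firstWeight, Finset.sum_mul]
  simp only [pow_add]

theorem coeff_coordPoly_ne_zero_iff (f : Fin (n + 1) → Fin d) (e : ℕ) :
    (coordPoly n d f).coeff e ≠ 0 ↔ ∃ t ∈ range (if (f 0 : ℕ) = 0 then 1 else n),
      e = (f 0 : ℕ) * d ^ t + bigEndianValue (Fin.tail f) := by
  rw [coordPoly_eq_sum, coeff_sum_X_pow_ne_zero_iff]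

end CoordPoly

section Span

variable {n d : ℕ}

theorem coordPoly_mem_degreeLT (hn : 1 ≤ n) (f : Fin (n + 1) → Fin d) :
    coordPoly n d f ∈ degreeLT ℂ ((2 * d - 1) * d ^ (n - 1)) := by
  obtain ⟨k, rfl⟩ : ∃ k, n = k + 1 := ⟨n - 1, by omega⟩
  rw [coordPoly_eq_sum]
  refine Submodule.sum_mem _ fun t ht => ?_
  have ht : t ≤ k := by split_ifs at ht <;> simp at ht <;> omega
  have hhead : (f 0 : ℕ) * d ^ t ≤ (d - 1) * d ^ k :=
    Nat.mul_le_mul (by have := (f 0).isLt; omega) (Nat.pow_le_pow_right (f 0).pos ht)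
  have htail : bigEndianValue (Fin.tail f) < d * d ^ k := by
    simpa [pow_succ, mul_comm] using bigEndianValue_lt (Fin.tail f)
  have hE : (2 * d - 1) * d ^ k = (d - 1) * d ^ k + d * d ^ k := by
    rw [← add_mul]; congr 1; have := (f 0).pos; omega
  rw [mem_degreeLT, degree_X_pow, Nat.cast_lt, Nat.add_sub_cancel, hE]
  omega

theorem X_pow_mem_span_coordPoly (hn : 1 ≤ n) (hd : 2 ≤ d) {e : ℕ}
    (he : e < (2 * d - 1) * d ^ (n - 1)) :
    X ^ e ∈ Submodule.span ℂ (Set.range (coordPoly n d)) := by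
  induction e using Nat.strong_induction_on with
  | _ e ih =>
  by_cases hlow : e < d ^ n
  · obtain ⟨g, hg⟩ := exists_bigEndianValue_eq hlow
    have hQ : coordPoly n d (Fin.cons ⟨0, by omega⟩ g) = X ^ e := by simp [coordPoly_eq_sum, hg]
    exact hQ ▸ Submodule.subset_span ⟨_, rfl⟩
  obtain ⟨k, rfl⟩ : ∃ k, n = k + 1 := ⟨n - 1, by omega⟩
  simp only [Nat.add_sub_cancel] at he ih
  have hc : 0 < d ^ k := by positivity
  have hsucc : d ^ (k + 1) = d * d ^ k := by rw [pow_succ, mul_comm]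
  have hq₁ : d ≤ e / d ^ k := (Nat.le_div_iff_mul_le hc).2 (by omega)
  have hq₂ : e / d ^ k < 2 * d - 1 := (Nat.div_lt_iff_lt_mul hc).2 he
  -- `e = j d^k + m` with `1 ≤ j < d` and `m < d^{k+1}`: then `X^e` is the top monomial of
  -- `Q_{(j, m)}`, all of whose other exponents are smaller than `e`
  set j := e / d ^ k - (d - 1)
  set m := (d - 1) * d ^ k + e % d ^ k
  have hm : m < d ^ (k + 1) := by
    have : (d - 1) * d ^ k + d ^ k = d * d ^ k := by
      rw [← Nat.succ_mul, Nat.succ_eq_add_one, Nat.sub_add_cancel (by omega)]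
    have := Nat.mod_lt e hc
    omega
  have hejm : e = j * d ^ k + m := by
    rw [← add_assoc, ← add_mul, Nat.sub_add_cancel (by omega), mul_comm, Nat.div_add_mod]
  obtain ⟨g, hg⟩ := exists_bigEndianValue_eq hm
  have hQ : coordPoly (k + 1) d (Fin.cons ⟨j, by omega⟩ g)
      = ∑ t ∈ range k, X ^ (j * d ^ t + m) + X ^ e := by
    rw [coordPoly_eq_sum, Fin.cons_zero, Fin.tail_cons, hg, if_neg (by simp; omega),
      sum_range_succ, ← hejm]
  rw [eq_sub_of_add_eq' hQ.symm]
  refine Submodule.sub_mem _ (Submodule.subset_span ⟨_, rfl⟩) (Submodule.sum_mem _ fun t ht => ?_)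
  have : j * d ^ t < j * d ^ k :=
    Nat.mul_lt_mul_of_pos_left (Nat.pow_lt_pow_right hd (by simpa using ht)) (by omega)
  exact ih _ (by omega) (by omega)

theorem span_coordPoly (hn : 1 ≤ n) (hd : 2 ≤ d) :
    Submodule.span ℂ (Set.range (coordPoly n d)) = degreeLT ℂ ((2 * d - 1) * d ^ (n - 1)) := by
  classical
  refine le_antisymm (Submodule.span_le.2 ?_) ?_
  · rintro _ ⟨f, rfl⟩
    exact coordPoly_mem_degreeLT hn f
  · rw [degreeLT_eq_span_X_pow, Submodule.span_le]
    intro p hp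
    obtain ⟨e, he, rfl⟩ := Finset.mem_image.1 hp
    exact X_pow_mem_span_coordPoly hn hd (by simpa using he)

end Span

section Orthogonal

variable (n d : ℕ)

def coordPolyMap : QSpace (n + 1) d →ₗ[ℂ] ℂ[X] :=
  (Fintype.linearCombination ℂ (coordPoly n d)).comp (WithLp.linearEquiv 2 ℂ _).toLinearMap

variable {n d}

theorem coordPolyMap_apply (v : QSpace (n + 1) d) :
    coordPolyMap n d v = ∑ f, v f • coordPoly n d f := by
  simp [coordPolyMap, Fintype.linearCombination_apply]

theorem range_coordPolyMap :
    LinearMap.range (coordPolyMap n d) = Submodule.span ℂ (Set.range (coordPoly n d)) := by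
  rw [coordPolyMap, LinearMap.range_comp, LinearEquiv.range, Submodule.map_top,
    Fintype.range_linearCombination]

theorem conj_eval_coordPoly (α : ℂ) (f : Fin (n + 1) → Fin d) :
    starRingEnd ℂ ((coordPoly n d f).eval α) = (coordPoly n d f).eval (starRingEnd ℂ α) := by
  simp [coordPoly_eq_sum, eval_finsetSum]

theorem inner_psi_eq_eval (α : ℂ) (v : QSpace (n + 1) d) :
    inner ℂ (PsiFam (n + 1) d (psiFirst (n + 1) d) α) v
      = (coordPolyMap n d v).eval (starRingEnd ℂ α) := by
  simp only [PiLp.inner_apply, RCLike.inner_apply, coordPolyMap_apply, eval_finsetSum, eval_smul,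
    smul_eq_mul, ← eval_coordPoly, conj_eval_coordPoly]

theorem orthogonal_span_psi :
    (Submodule.span ℂ (Set.range (PsiFam (n + 1) d (psiFirst (n + 1) d))))ᗮ
      = LinearMap.ker (coordPolyMap n d) := by
  ext v
  have hperp : v ∈ (Submodule.span ℂ (Set.range (PsiFam (n + 1) d (psiFirst (n + 1) d))))ᗮ
      ↔ ∀ α, inner ℂ (PsiFam (n + 1) d (psiFirst (n + 1) d) α) v = 0 := by
    refine ⟨fun hv α => Submodule.inner_right_of_mem_orthogonal
      (Submodule.subset_span (Set.mem_range_self α)) hv,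
      fun h => (Submodule.mem_orthogonal _ v).2 fun u hu => ?_⟩
    have hle : Submodule.span ℂ (Set.range (PsiFam (n + 1) d (psiFirst (n + 1) d))) ≤ (ℂ ∙ v)ᗮ :=
      Submodule.span_le.2 <| Set.range_subset_iff.2 fun α =>
        Submodule.mem_orthogonal_singleton_iff_inner_left.2 (h α)
    exact Submodule.mem_orthogonal_singleton_iff_inner_left.1 (hle hu)
  rw [hperp, LinearMap.mem_ker]
  simp only [inner_psi_eq_eval]
  refine ⟨fun h => Polynomial.funext fun β => ?_, fun h α => by simp [h]⟩
  simpa using h (starRingEnd ℂ β)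

end Orthogonal

theorem Nat.mul_pow_add_div_pow_mod {d p t : ℕ} (a : ℕ) {b : ℕ} (hd : 0 < d) (hpt : p ≤ t)
    (hb : b / d ^ p % d = 0) : (a * d ^ t + b) / d ^ p % d = a * d ^ (t - p) % d := by
  have hsplit : a * d ^ t = a * d ^ (t - p) * d ^ p := by
    rw [mul_assoc, ← pow_add, Nat.sub_add_cancel hpt]
  rw [hsplit, add_comm, Nat.add_mul_div_right _ _ (pow_pos hd p), Nat.add_mod, hb, zero_add,
    Nat.mod_mod]

theorem Nat.eq_or_lt_of_mul_pow_add_eq {d p t j j' m m' : ℕ} (hj : j < d) (hj' : j' < d)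
    (hm : m / d ^ p % d = 0) (hm' : m' / d ^ p % d = 0) (he : j * d ^ p + m = j' * d ^ t + m') :
    j = j' ∧ m = m' ∨ j' ≠ 0 ∧ (j = 0 ∨ m < m') := by
  have hd : 0 < d := by omega
  have hdigit : ∀ {a b}, a < d → b / d ^ p % d = 0 → (a * d ^ p + b) / d ^ p % d = a :=
    fun ha hb => by
      rw [Nat.mul_pow_add_div_pow_mod _ hd le_rfl hb, Nat.sub_self, pow_zero, mul_one,
        Nat.mod_eq_of_lt ha]
  by_cases hj'0 : j' = 0
  · subst hj'0
    rw [zero_mul, zero_add] at he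
    obtain rfl : j = 0 := by rw [← hdigit hj hm, he, hm']
    exact Or.inl ⟨rfl, by simpa using he⟩
  by_cases hj0 : j = 0
  · exact Or.inr ⟨hj'0, Or.inl hj0⟩
  rcases lt_trichotomy t p with htp | rfl | hpt
  · have hlow : j' * d ^ t < d ^ p :=
      calc j' * d ^ t < d * d ^ t := Nat.mul_lt_mul_of_pos_right hj' (by positivity)
        _ = d ^ (t + 1) := by rw [pow_succ, mul_comm]
        _ ≤ d ^ p := Nat.pow_le_pow_right hd htp
    have hhigh : d ^ p ≤ j * d ^ p := Nat.le_mul_of_pos_left _ (Nat.pos_of_ne_zero hj0)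
    exact Or.inr ⟨hj'0, Or.inr (by omega)⟩
  · obtain rfl : j = j' := by rw [← hdigit hj hm, he, hdigit hj' hm']
    exact Or.inl ⟨rfl, by omega⟩
  · refine absurd ?_ hj0
    rw [← hdigit hj hm, he, Nat.mul_pow_add_div_pow_mod _ hd hpt.le hm']
    obtain ⟨s, rfl⟩ := Nat.exists_eq_add_of_lt hpt
    rw [show p + s + 1 - p = s + 1 by omega, pow_succ, ← mul_assoc, Nat.mul_mod_left]

section Entanglement

variable {n d : ℕ}

theorem eq_of_head_eq_of_bigEndianValue_tail_eq {f f' : Fin (n + 1) → Fin d}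
    (h0 : (f 0 : ℕ) = f' 0) (h : bigEndianValue (Fin.tail f) = bigEndianValue (Fin.tail f')) :
    f = f' := by
  rw [← Fin.cons_self_tail f, ← Fin.cons_self_tail f', Fin.val_inj.1 h0,
    bigEndianValue_injective h]

theorem linearIndependent_coordPoly_of_head_eq_zero {ι : Type*} [Fintype ι]
    {F : ι → Fin (n + 1) → Fin d} (hF : Function.Injective F) (h0 : ∀ x, (F x 0 : ℕ) = 0) :
    LinearIndependent ℂ (fun x => coordPoly n d (F x)) := by
  refine linearIndependent_of_triangular _
    (fun x => lcoeff ℂ (bigEndianValue (Fin.tail (F x)))) (fun _ => 0) (fun x => ?_) ?_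
  · exact (coeff_coordPoly_ne_zero_iff _ _).2 ⟨0, by simp [h0], by simp [h0]⟩
  · intro x y hyx hne
    obtain ⟨t, -, he⟩ := (coeff_coordPoly_ne_zero_iff _ _).1 hne
    rw [h0 y, zero_mul, zero_add] at he
    exact absurd (hF (eq_of_head_eq_of_bigEndianValue_tail_eq (by rw [h0, h0]) he.symm)) hyx

theorem linearIndependent_coordPoly_of_digit_eq_zero {ι : Type*} [Fintype ι]
    {F : ι → Fin (n + 1) → Fin d} (hF : Function.Injective F) {p : ℕ} (hp : p < n)
    (hdig : ∀ x, bigEndianValue (Fin.tail (F x)) / d ^ p % d = 0) :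
    LinearIndependent ℂ (fun x => coordPoly n d (F x)) := by
  refine linearIndependent_of_triangular _
    (fun x => lcoeff ℂ ((F x 0 : ℕ) * d ^ p + bigEndianValue (Fin.tail (F x))))
    (fun x => if (F x 0 : ℕ) = 0 then d ^ n + 1 else d ^ n - bigEndianValue (Fin.tail (F x)))
    (fun x => ?_) ?_
  · rw [lcoeff_apply, coeff_coordPoly_ne_zero_iff]
    by_cases h : (F x 0 : ℕ) = 0
    · exact ⟨0, by simp [h], by simp [h]⟩
    · exact ⟨p, by simp [h, hp], rfl⟩
  intro x y hyx hne
  obtain ⟨t, -, he⟩ := (coeff_coordPoly_ne_zero_iff _ _).1 hne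
  have hmx := bigEndianValue_lt (Fin.tail (F x))
  have hmy := bigEndianValue_lt (Fin.tail (F y))
  rcases Nat.eq_or_lt_of_mul_pow_add_eq (F x 0).isLt (F y 0).isLt (hdig x) (hdig y) he with
    ⟨h0, hm⟩ | ⟨hy, hx | hlt⟩
  · exact absurd (hF (eq_of_head_eq_of_bigEndianValue_tail_eq h0 hm)).symm hyx
  · simp only [hx, hy, if_true, if_false]
    omega
  · simp only [hy, if_false]
    split_ifs <;> omega

theorem linearIndependent_coordPoly_extendByZero [NeZero d] {S : Set (Fin (n + 1))}
    [DecidablePred (· ∈ S)] (hS : S ≠ Set.univ) :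
    LinearIndependent ℂ (fun a : S → Fin d => coordPoly n d (extendByZero S a)) := by
  obtain ⟨i₀, hi₀⟩ : ∃ i, i ∉ S := by
    by_contra! h
    exact hS (Set.eq_univ_of_forall h)
  induction i₀ using Fin.cases with
  | zero =>
    exact linearIndependent_coordPoly_of_head_eq_zero extendByZero_injective
      fun a => by rw [extendByZero_of_notMem a hi₀, Fin.val_zero]
  | succ k =>
    refine linearIndependent_coordPoly_of_digit_eq_zero extendByZero_injective
      (p := n - 1 - k) (by omega) fun a => ?_
    rw [bigEndianValue_div_pow_mod, Fin.tail, extendByZero_of_notMem a hi₀, Fin.val_zero]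

theorem coordPoly_extendByZero [NeZero d] {S : Set (Fin (n + 1))} [DecidablePred (· ∈ S)]
    (a : S → Fin d) : coordPoly n d (extendByZero S a) = ∏ i : S, partyWeight n d i (a i) :=
  prod_extendByZero (partyWeight n d) partyWeight_zero a

theorem coordPolyMap_eq_mul [NeZero d] (S : Set (Fin (n + 1))) [DecidablePred (· ∈ S)]
    (v : QSpace (n + 1) d) (φ : (S → Fin d) → ℂ) (χ : (↥Sᶜ → Fin d) → ℂ)
    (hv : ∀ f, v f = φ (fun i => f i) * χ (fun i => f i)) :
    coordPolyMap n d v = (∑ a, φ a • coordPoly n d (extendByZero S a))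
      * ∑ b, χ b • coordPoly n d (extendByZero Sᶜ b) := by
  simp only [coordPolyMap_apply, hv, coordPoly_extendByZero]
  exact sum_smul_prod_eq_mul S _ φ χ

theorem isGES_ker_coordPolyMap [NeZero d] : IsGES (LinearMap.ker (coordPolyMap n d)) := by
  classical
  intro v hv hv0
  refine ⟨hv0, ?_⟩
  rintro ⟨S, hSne, hSu, φ, χ, hfac⟩
  have hprod := coordPolyMap_eq_mul S v φ χ hfac
  rw [LinearMap.mem_ker.1 hv, eq_comm, mul_eq_zero] at hprod
  have hφχ : φ = 0 ∨ χ = 0 := hprod.imp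
    (fun h => funext (Fintype.linearIndependent_iff.1
      (linearIndependent_coordPoly_extendByZero hSu) φ h))
    (fun h => funext (Fintype.linearIndependent_iff.1
      (linearIndependent_coordPoly_extendByZero (Set.compl_ne_univ.2 hSne)) χ h))
  apply hv0
  ext f
  rcases hφχ with rfl | rfl <;> simp [hfac]

end Entanglement

theorem finrank_span_psi {n d : ℕ} (hn : 1 ≤ n) (hd : 2 ≤ d) :
    Module.finrank ℂ (Submodule.span ℂ (Set.range (PsiFam (n + 1) d (psiFirst (n + 1) d))))
      = 2 * d ^ n - d ^ (n - 1) ∧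
    Module.finrank ℂ (Submodule.span ℂ (Set.range (PsiFam (n + 1) d (psiFirst (n + 1) d))))ᗮ
      = d ^ (n - 1) * (d - 1) ^ 2 := by
  have hsum := Submodule.finrank_add_finrank_orthogonal
    (Submodule.span ℂ (Set.range (PsiFam (n + 1) d (psiFirst (n + 1) d))))
  have hker := LinearMap.finrank_range_add_finrank_ker (coordPolyMap n d)
  rw [range_coordPolyMap, span_coordPoly hn hd, (degreeLTEquiv ℂ _).finrank_eq,
    Module.finrank_fin_fun] at hker
  rw [← orthogonal_span_psi] at hker
  simp only [finrank_euclideanSpace, Fintype.card_fun, Fintype.card_fin] at hsum hker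
  obtain ⟨k, rfl⟩ : ∃ k, n = k + 1 := ⟨n - 1, by omega⟩
  obtain ⟨e, rfl⟩ : ∃ e, d = e + 1 := ⟨d - 1, by omega⟩
  simp only [Nat.add_sub_cancel, show 2 * (e + 1) - 1 = 2 * e + 1 by omega] at hsum hker ⊢
  have h1 : (e + 1) ^ (k + 1 + 1) = (2 * e + 1) * (e + 1) ^ k + (e + 1) ^ k * e ^ 2 := by ring
  have h2 : 2 * (e + 1) ^ (k + 1) = (2 * e + 1) * (e + 1) ^ k + (e + 1) ^ k := by ring
  omega

theorem stmt5 (N d : ℕ) (hd : 2 ≤ d) (hN : 2 ≤ N) :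
    IsGES (Submodule.span ℂ (Set.range
        (PsiFam N d (fun α j =>
          if (j : ℕ) = 0 then 1
          else ∑ t ∈ Finset.range (N - 1), α ^ ((j : ℕ) * d ^ t)))))ᗮ ∧
    Module.finrank ℂ (Submodule.span ℂ (Set.range
        (PsiFam N d (fun α j =>
          if (j : ℕ) = 0 then 1
          else ∑ t ∈ Finset.range (N - 1), α ^ ((j : ℕ) * d ^ t)))))ᗮ
      = d ^ (N - 2) * (d - 1) ^ 2 ∧
    Module.finrank ℂ (Submodule.span ℂ (Set.range
        (PsiFam N d (fun α j =>
          if (j : ℕ) = 0 then 1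
          else ∑ t ∈ Finset.range (N - 1), α ^ ((j : ℕ) * d ^ t)))))
      = 2 * d ^ (N - 1) - d ^ (N - 2) := by
  obtain ⟨n, rfl⟩ : ∃ n, N = n + 1 := ⟨N - 1, by omega⟩
  have : NeZero d := ⟨by omega⟩
  obtain ⟨hspan, hperp⟩ := finrank_span_psi (n := n) (by omega) hd
  -- the first-party vector of the statement unfolds to `psiFirst (n + 1) d`
  exact ⟨orthogonal_span_psi ▸ isGES_ker_coordPolyMap, hperp, hspan⟩
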